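/- arXiv:2203.05165 — 2 statements merged into one kernel-verified Lean document; each statement's English description precedes it below -/
import Mathlib

section
/- Let α ∈ (0,1) and let p, q ≥ 1 and r ∈ [1, 1/(1−α)) satisfy 1/q + 1 = 1/p + 1/r. Then for any real numbers a < b, any τ ∈ (0, b−a], and any ψ ∈ Lᵖ([a,b];ℝ), one has (∫_a^{a+τ} |∫_a^t ψ(s)(t−s)^{α−1} ds|^q dt)^{1/q} ≤ (τ^{1−r(1−α)}/(1−r(1−α)))^{1/r} ‖ψ‖_{Lᵖ([a,b];ℝ)}, and (∫_a^{a+τ} |∫_a^t ψ(s) ds|^q dt)^{1/q} ≤ τ^{1/r} ‖ψ‖_{Lᵖ([a,b];ℝ)}. -/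
/-!
Extend `ψ` by zero outside `(a, a + τ]` and the kernel by zero outside `[0, τ)`: the Volterra
integral is then dominated by a convolution on `ℝ`, so both estimates are Young's inequality
`‖f ⋆ g‖_q ≤ ‖f‖_p ‖g‖_r`, where `‖g‖_r ^ r = ∫₀^τ u ^ ((α - 1) r) du` is finite exactly because
`r (1 - α) < 1`. Young's inequality follows from Hölder's inequality with the three exponents
`1/q, 1/p - 1/q, 1/r - 1/q` applied to the factorization
`f g = (f ^ p g ^ r) ^ (1/q) (f ^ p) ^ (1/p - 1/q) (g ^ r) ^ (1/r - 1/q)` of the integrand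
of the convolution, followed by Tonelli.
-/

open MeasureTheory Set
open scoped ENNReal

theorem ENNReal.lintegral_mul_mul_rpow_le {α : Type*} [MeasurableSpace α] {μ : Measure α}
    {f g h : α → ℝ≥0∞} (hf : AEMeasurable f μ) (hg : AEMeasurable g μ) (hh : AEMeasurable h μ)
    {a b c : ℝ} (ha : 0 ≤ a) (hb : 0 ≤ b) (hc : 0 ≤ c) (habc : a + b + c = 1) :
    ∫⁻ x, f x ^ a * g x ^ b * h x ^ c ∂μ
      ≤ (∫⁻ x, f x ∂μ) ^ a * (∫⁻ x, g x ∂μ) ^ b * (∫⁻ x, h x ∂μ) ^ c := by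
  have := ENNReal.lintegral_prod_norm_pow_le (μ := μ) Finset.univ (f := ![f, g, h])
    (p := ![a, b, c]) (by simp [Fin.forall_fin_succ, hf, hg, hh])
    (by simpa [Fin.sum_univ_three] using habc) (by simp [Fin.forall_fin_succ, ha, hb, hc])
  simpa [Fin.prod_univ_three] using this

theorem le_of_one_div_add_one_eq {p q r : ℝ} (hp : 0 < p) (hq : 0 < q) (hr : 1 ≤ r)
    (hpqr : 1 / q + 1 = 1 / p + 1 / r) : p ≤ q := by
  have : 1 / r ≤ 1 := by rw [div_le_one (by linarith)]; exact hr
  exact (one_div_le_one_div hq hp).mp (by linarith)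

theorem ENNReal.mul_eq_rpow_mul_rpow_mul_rpow (u v : ℝ≥0∞) {p q r : ℝ} (hp : 0 < p) (hr : 0 < r)
    (hpq : p ≤ q) (hrq : r ≤ q) :
    u * v = (u ^ p * v ^ r) ^ (1 / q) * (u ^ p) ^ (1 / p - 1 / q) * (v ^ r) ^ (1 / r - 1 / q) := by
  have hq : 0 < q := hp.trans_le hpq
  have hpq' : 0 ≤ 1 / p - 1 / q := sub_nonneg.mpr (one_div_le_one_div_of_le hp hpq)
  have hrq' : 0 ≤ 1 / r - 1 / q := sub_nonneg.mpr (one_div_le_one_div_of_le hr hrq)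
  rw [ENNReal.mul_rpow_of_nonneg _ _ (by positivity), ← ENNReal.rpow_mul, ← ENNReal.rpow_mul,
    ← ENNReal.rpow_mul, ← ENNReal.rpow_mul, mul_right_comm (u ^ _),
    ← ENNReal.rpow_add_of_nonneg _ _ (by positivity) (by positivity), mul_assoc,
    ← ENNReal.rpow_add_of_nonneg _ _ (by positivity) (by positivity), ← mul_add, ← mul_add,
    add_sub_cancel, add_sub_cancel, mul_one_div_cancel hp.ne', mul_one_div_cancel hr.ne',
    ENNReal.rpow_one, ENNReal.rpow_one]

theorem ENNReal.mul_rpow_sub_one {c : ℝ} (hc : 1 ≤ c) (x : ℝ≥0∞) : x * x ^ (c - 1) = x ^ c := by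
  nth_rw 1 [← ENNReal.rpow_one x]
  rw [← ENNReal.rpow_add_of_nonneg _ _ zero_le_one (by linarith), add_sub_cancel]

namespace MeasureTheory

variable {G : Type*} [MeasurableSpace G] [AddGroup G] [MeasurableAdd₂ G] [MeasurableNeg G]
  {μ : Measure G} [μ.IsAddLeftInvariant]

theorem lintegral_neg_add_eq_self [μ.IsNegInvariant] (g : G → ℝ≥0∞) (x : G) :
    ∫⁻ y, g (-y + x) ∂μ = ∫⁻ y, g y ∂μ := by
  have (y : G) : -y + x = -(-x + y) := by simp [neg_add_rev]
  simp_rw [this, lintegral_add_left_eq_self (fun y => g (-y)), lintegral_neg_eq_self]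

theorem lintegral_lconvolution [SFinite μ] {f g : G → ℝ≥0∞} (hf : Measurable f)
    (hg : Measurable g) :
    ∫⁻ x, (f ⋆ₗ[μ] g) x ∂μ = (∫⁻ x, f x ∂μ) * ∫⁻ x, g x ∂μ := by
  simp_rw [lconvolution_def]
  rw [lintegral_lintegral_swap (by fun_prop)]
  have (y : G) : ∫⁻ x, f y * g (-y + x) ∂μ = f y * ∫⁻ x, g x ∂μ := by
    rw [lintegral_const_mul _ (by fun_prop), lintegral_add_left_eq_self]
  simp_rw [this]
  exact lintegral_mul_const _ hf

variable [μ.IsNegInvariant] {p q r : ℝ} {f g : G → ℝ≥0∞}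

theorem lconvolution_le_mul_rpow_mul_rpow (hp : 0 < p) (hr : 0 < r) (hpq : p ≤ q) (hrq : r ≤ q)
    (hpqr : 1 / q + 1 = 1 / p + 1 / r) (hf : Measurable f) (hg : Measurable g) (x : G) :
    (f ⋆ₗ[μ] g) x ≤ ((fun y => f y ^ p) ⋆ₗ[μ] fun y => g y ^ r) x ^ (1 / q)
      * (∫⁻ y, f y ^ p ∂μ) ^ (1 / p - 1 / q) * (∫⁻ y, g y ^ r ∂μ) ^ (1 / r - 1 / q) := by
  have hq : 0 < q := hp.trans_le hpq
  simp_rw [lconvolution_def, ENNReal.mul_eq_rpow_mul_rpow_mul_rpow (f _) _ hp hr hpq hrq]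
  rw [← lintegral_neg_add_eq_self (fun y => g y ^ r) x]
  refine ENNReal.lintegral_mul_mul_rpow_le (by fun_prop) (by fun_prop) (by fun_prop)
    (by positivity) (sub_nonneg.mpr (one_div_le_one_div_of_le hp hpq))
    (sub_nonneg.mpr (one_div_le_one_div_of_le hr hrq)) (by linarith)

theorem young_lconvolution_le [SFinite μ] (hp : 1 ≤ p) (hq : 0 < q) (hr : 1 ≤ r)
    (hpqr : 1 / q + 1 = 1 / p + 1 / r) (hf : Measurable f) (hg : Measurable g) :
    (∫⁻ x, (f ⋆ₗ[μ] g) x ^ q ∂μ) ^ (1 / q)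
      ≤ (∫⁻ x, f x ^ p ∂μ) ^ (1 / p) * (∫⁻ x, g x ^ r ∂μ) ^ (1 / r) := by
  have hp0 : 0 < p := by linarith
  have hr0 : 0 < r := by linarith
  have hpq : p ≤ q := le_of_one_div_add_one_eq hp0 hq hr hpqr
  have hrq : r ≤ q := le_of_one_div_add_one_eq hr0 hq hp (by linarith)
  set A := ∫⁻ x, f x ^ p ∂μ
  set B := ∫⁻ x, g x ^ r ∂μ
  have hexp (a : ℝ) : (1 / a - 1 / q) * q = q / a - 1 := by field_simp
  have hpow : ∫⁻ x, (f ⋆ₗ[μ] g) x ^ q ∂μ ≤ A ^ (q / p) * B ^ (q / r) := calc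
    ∫⁻ x, (f ⋆ₗ[μ] g) x ^ q ∂μ
      ≤ ∫⁻ x, ((fun y => f y ^ p) ⋆ₗ[μ] fun y => g y ^ r) x
          * (A ^ (q / p - 1) * B ^ (q / r - 1)) ∂μ := by
      refine lintegral_mono fun x => ?_
      grw [lconvolution_le_mul_rpow_mul_rpow hp0 hr0 hpq hrq hpqr hf hg x]
      rw [ENNReal.mul_rpow_of_nonneg _ _ hq.le, ENNReal.mul_rpow_of_nonneg _ _ hq.le,
        ← ENNReal.rpow_mul, ← ENNReal.rpow_mul, ← ENNReal.rpow_mul, one_div_mul_cancel hq.ne',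
        ENNReal.rpow_one, mul_assoc, hexp, hexp]
    _ = A * B * (A ^ (q / p - 1) * B ^ (q / r - 1)) := by
      rw [lintegral_mul_const _ (by fun_prop), lintegral_lconvolution (by fun_prop) (by fun_prop)]
    _ = A ^ (q / p) * B ^ (q / r) := by
      rw [mul_mul_mul_comm, ENNReal.mul_rpow_sub_one ((one_le_div hp0).mpr hpq),
        ENNReal.mul_rpow_sub_one ((one_le_div hr0).mpr hrq)]
  calc (∫⁻ x, (f ⋆ₗ[μ] g) x ^ q ∂μ) ^ (1 / q) ≤ (A ^ (q / p) * B ^ (q / r)) ^ (1 / q) :=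
        ENNReal.rpow_le_rpow hpow (by positivity)
    _ = A ^ (1 / p) * B ^ (1 / r) := by
      rw [ENNReal.mul_rpow_of_nonneg _ _ (by positivity), ← ENNReal.rpow_mul, ← ENNReal.rpow_mul]
      congr 2 <;> field_simp

end MeasureTheory

theorem lintegral_indicator_rpow {α : Type*} [MeasurableSpace α] {μ : Measure α} {s : Set α}
    (hs : MeasurableSet s) (f : α → ℝ≥0∞) {p : ℝ} (hp : 0 < p) :
    ∫⁻ x, s.indicator f x ^ p ∂μ = ∫⁻ x in s, f x ^ p ∂μ := by
  rw [← lintegral_indicator hs]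
  congr 1 with x
  by_cases hx : x ∈ s <;> simp [hx, hp]

theorem young_volterra_le {p q r a b τ K : ℝ} (hp : 1 ≤ p) (hq : 0 < q) (hr : 1 ≤ r)
    (hpqr : 1 / q + 1 = 1 / p + 1 / r) (hτb : a + τ ≤ b) {ψ k : ℝ → ℝ}
    (hψ_meas : Measurable ψ) (hψ_Lp : IntegrableOn (fun s => |ψ s| ^ p) (Ioc a b))
    (hk_meas : Measurable k) (hK : 0 ≤ K) (hk : ∫⁻ u in Ioc 0 τ, ‖k u‖ₑ ^ r ≤ ENNReal.ofReal K) :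
    (∫ t in Ioc a (a + τ), |∫ s in Ioc a t, ψ s * k (t - s)| ^ q) ^ (1 / q)
      ≤ K ^ (1 / r) * (∫ s in Ioc a b, |ψ s| ^ p) ^ (1 / p) := by
  set F := (Ioc a (a + τ)).indicator fun s => ‖ψ s‖ₑ
  set G := (Ico 0 τ).indicator fun u => ‖k u‖ₑ
  have hF_meas : Measurable F := by fun_prop (disch := measurability)
  have hG_meas : Measurable G := by fun_prop (disch := measurability)
  have hvolterra : ∀ t ∈ Ioc a (a + τ), ‖∫ s in Ioc a t, ψ s * k (t - s)‖ₑ ≤ (F ⋆ₗ G) t := by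
    intro t ht
    calc ‖∫ s in Ioc a t, ψ s * k (t - s)‖ₑ ≤ ∫⁻ s in Ioc a t, ‖ψ s * k (t - s)‖ₑ :=
          enorm_integral_le_lintegral_enorm _
      _ = ∫⁻ s in Ioc a t, F s * G (-s + t) := by
          refine setLIntegral_congr_fun measurableSet_Ioc fun s hs => ?_
          have hFs : s ∈ Ioc a (a + τ) := ⟨hs.1, hs.2.trans ht.2⟩
          have hGs : t - s ∈ Ico 0 τ := ⟨by linarith [hs.2], by linarith [hs.1, ht.2]⟩
          simp [F, G, hFs, hGs, enorm_mul, neg_add_eq_sub]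
      _ ≤ (F ⋆ₗ G) t := setLIntegral_le_lintegral _ _
  have hLq : ENNReal.ofReal (∫ t in Ioc a (a + τ), |∫ s in Ioc a t, ψ s * k (t - s)| ^ q)
      ≤ ∫⁻ t, (F ⋆ₗ G) t ^ q := calc
    _ = ‖∫ t in Ioc a (a + τ), |∫ s in Ioc a t, ψ s * k (t - s)| ^ q‖ₑ :=
        (Real.enorm_eq_ofReal (by positivity)).symm
    _ ≤ ∫⁻ t in Ioc a (a + τ), ‖∫ s in Ioc a t, ψ s * k (t - s)‖ₑ ^ q := by
        refine (enorm_integral_le_lintegral_enorm _).trans_eq (lintegral_congr fun t => ?_)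
        rw [Real.enorm_eq_ofReal (by positivity),
          ← ENNReal.ofReal_rpow_of_nonneg (abs_nonneg _) hq.le, Real.enorm_eq_ofReal_abs]
    _ ≤ ∫⁻ t in Ioc a (a + τ), (F ⋆ₗ G) t ^ q :=
        setLIntegral_mono (by fun_prop) fun t ht => by gcongr; exact hvolterra t ht
    _ ≤ ∫⁻ t, (F ⋆ₗ G) t ^ q := setLIntegral_le_lintegral _ _
  have hLp : ∫⁻ s, F s ^ p ≤ ENNReal.ofReal (∫ s in Ioc a b, |ψ s| ^ p) := calc
    _ = ∫⁻ s in Ioc a (a + τ), ‖ψ s‖ₑ ^ p :=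
        lintegral_indicator_rpow measurableSet_Ioc _ (by linarith)
    _ ≤ ∫⁻ s in Ioc a b, ‖ψ s‖ₑ ^ p := lintegral_mono_set (Ioc_subset_Ioc_right hτb)
    _ = ENNReal.ofReal (∫ s in Ioc a b, |ψ s| ^ p) := by
        rw [ofReal_integral_eq_lintegral_ofReal hψ_Lp (ae_of_all _ fun s => by positivity)]
        refine lintegral_congr fun s => ?_
        rw [Real.enorm_eq_ofReal_abs, ENNReal.ofReal_rpow_of_nonneg (abs_nonneg _) (by linarith)]
  have hLr : ∫⁻ u, G u ^ r ≤ ENNReal.ofReal K := by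
    rwa [lintegral_indicator_rpow measurableSet_Ico _ (by linarith),
      setLIntegral_congr Ico_ae_eq_Ioc]
  rw [← ENNReal.ofReal_le_ofReal_iff (by positivity), ENNReal.ofReal_mul (by positivity),
    ← ENNReal.ofReal_rpow_of_nonneg (by positivity) (by positivity),
    ← ENNReal.ofReal_rpow_of_nonneg hK (by positivity),
    ← ENNReal.ofReal_rpow_of_nonneg (by positivity) (by positivity), mul_comm]
  calc _ ≤ (∫⁻ t, (F ⋆ₗ G) t ^ q) ^ (1 / q) := by gcongr
    _ ≤ (∫⁻ s, F s ^ p) ^ (1 / p) * (∫⁻ u, G u ^ r) ^ (1 / r) :=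
        young_lconvolution_le hp hq hr hpqr hF_meas hG_meas
    _ ≤ _ := by gcongr

theorem lintegral_Ioc_enorm_rpow_rpow {β r τ : ℝ} (hr : 0 ≤ r) (hβr : -1 < β * r) (hτ : 0 ≤ τ) :
    ∫⁻ u in Ioc 0 τ, ‖u ^ β‖ₑ ^ r = ENNReal.ofReal (τ ^ (β * r + 1) / (β * r + 1)) := by
  have hint : IntegrableOn (fun u : ℝ => u ^ (β * r)) (Ioc 0 τ) := by
    simpa [intervalIntegrable_iff_integrableOn_Ioc_of_le hτ] using
      intervalIntegral.intervalIntegrable_rpow' (a := 0) (b := τ) hβr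
  rw [setLIntegral_congr_fun measurableSet_Ioc fun u hu => by
      rw [Real.enorm_eq_ofReal (Real.rpow_nonneg hu.1.le _),
        ENNReal.ofReal_rpow_of_nonneg (Real.rpow_nonneg hu.1.le _) hr, ← Real.rpow_mul hu.1.le],
    ← ofReal_integral_eq_lintegral_ofReal hint ((ae_restrict_iff' measurableSet_Ioc).mpr
      (ae_of_all _ fun u hu => Real.rpow_nonneg hu.1.le _)),
    ← intervalIntegral.integral_of_le hτ, integral_rpow (Or.inl hβr),
    Real.zero_rpow (by linarith), sub_zero]

theorem young_type_singular_estimates_general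
    (α p q r a b τ : ℝ)
    (hα : α ∈ Set.Ioo (0:ℝ) 1)
    (hp : 1 ≤ p) (hq : 1 ≤ q) (hr : 1 ≤ r) (hr' : r < 1 / (1 - α))
    (hpqr : 1 / q + 1 = 1 / p + 1 / r)
    (hτ : τ ∈ Set.Ioc 0 (b - a))
    (ψ : ℝ → ℝ) (hψ_meas : Measurable ψ)
    (hψ_Lp : IntegrableOn (fun s => |ψ s| ^ p) (Set.Ioc a b)) :
    (∫ t in Set.Ioc a (a + τ), |∫ s in Set.Ioc a t, ψ s * (t - s) ^ (α - 1)| ^ q) ^ (1 / q)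
        ≤ (τ ^ (1 - r * (1 - α)) / (1 - r * (1 - α))) ^ (1 / r)
            * (∫ s in Set.Ioc a b, |ψ s| ^ p) ^ (1 / p) ∧
    (∫ t in Set.Ioc a (a + τ), |∫ s in Set.Ioc a t, ψ s| ^ q) ^ (1 / q)
        ≤ τ ^ (1 / r) * (∫ s in Set.Ioc a b, |ψ s| ^ p) ^ (1 / p) := by
  obtain ⟨hτ0, hτb⟩ := hτ
  have hq0 : 0 < q := by linarith
  have hb : a + τ ≤ b := by linarith
  have hrα : r * (1 - α) < 1 := (lt_div_iff₀ (by linarith [hα.2])).mp (by simpa using hr')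
  refine ⟨young_volterra_le (k := fun u => u ^ (α - 1)) hp hq0 hr hpqr hb hψ_meas hψ_Lp
    (by fun_prop) (div_nonneg (by positivity) (by linarith)) ?_, ?_⟩
  · rw [lintegral_Ioc_enorm_rpow_rpow (by linarith) (by nlinarith) hτ0.le,
      show (α - 1) * r + 1 = 1 - r * (1 - α) by ring]
  · simpa using young_volterra_le (k := fun _ => 1) hp hq0 hr hpqr hb hψ_meas hψ_Lp
      measurable_const hτ0.le (by simp)

/-- Lemma A.2: Young-type estimates for the singular and nonsingular
convolution operators. -/
theorem young_type_singular_estimates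
    (α p q r a b τ : ℝ)
    (hα : α ∈ Set.Ioo (0:ℝ) 1)
    (hp : 1 ≤ p) (hq : 1 ≤ q) (hr : 1 ≤ r) (hr' : r < 1 / (1 - α))
    (hpqr : 1 / q + 1 = 1 / p + 1 / r)
    (hab : a < b) (hτ : τ ∈ Set.Ioc 0 (b - a))
    (ψ : ℝ → ℝ) (hψ_meas : Measurable ψ)
    (hψ_Lp : IntegrableOn (fun s => |ψ s| ^ p) (Set.Ioc a b)) :
    (∫ t in Set.Ioc a (a + τ), |∫ s in Set.Ioc a t, ψ s * (t - s) ^ (α - 1)| ^ q) ^ (1 / q)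
        ≤ (τ ^ (1 - r * (1 - α)) / (1 - r * (1 - α))) ^ (1 / r)
            * (∫ s in Set.Ioc a b, |ψ s| ^ p) ^ (1 / p) ∧
    (∫ t in Set.Ioc a (a + τ), |∫ s in Set.Ioc a t, ψ s| ^ q) ^ (1 / q)
        ≤ τ ^ (1 / r) * (∫ s in Set.Ioc a b, |ψ s| ^ p) ^ (1 / p) :=
  young_type_singular_estimates_general α p q r a b τ hα hp hq hr hr' hpqr hτ ψ hψ_meas hψ_Lp
end

section
/- (Spike-variation set lemma, nonsingular version.) Let (X,‖·‖) be a Banach space and T > 0. Suppose φ : Δ → X satisfies: (i) ‖φ(t,s)‖ ≤ φ̄(s) for all (t,s) ∈ Δ, where φ̄ ∈ L¹([0,T];ℝ); and (ii) for almost all s ∈ [0,T], the map t ↦ φ(t,s) is continuous from [s,T] to X. Then for every δ ∈ (0,1) there exists a measurable set E_δ ⊆ [0,T] with Lebesgue measure |E_δ| = δT such that sup_{t∈[0,T]} ‖∫₀ᵗ ((1/δ)·1_{E_δ}(s) − 1) φ(t,s) ds‖ ≤ δ. -/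
/-!
Split `[0,T]` into `n` blocks of length `T/n` and let `E_n` consist of the initial fraction `δ`
of every block. The weight `(1/δ)·1_{E_n} - 1` has mean zero on each block, so its integral
against a uniformly continuous function is controlled by the modulus of continuity at scale `T/n`.
Since the weights are bounded by `1/δ` and compactly supported continuous functions are dense in
`L¹`, the integral against any integrable function tends to `0` as `n → ∞`.
The kernels `t ↦ 1_{(0,t]} φ(t,·)` form a continuous curve in `L¹` by dominated convergence,
so on this compact curve the equicontinuous family of functionals converges uniformly (Ascoli),
and a large `n` gives `E_δ`.
-/

open MeasureTheory Set Filter Topology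

noncomputable section

namespace SpikeVariation

def spikeSet (T δ : ℝ) (n : ℕ) : Set ℝ :=
  ⋃ k ∈ Finset.range n, Ioc (k * (T / n)) (k * (T / n) + δ * (T / n))

def spikeWeight (δ : ℝ) (E : Set ℝ) (s : ℝ) : ℝ :=
  1 / δ * E.indicator (fun _ => 1) s - 1

theorem measurableSet_spikeSet (T δ : ℝ) (n : ℕ) : MeasurableSet (spikeSet T δ n) :=
  .biUnion (Finset.range n).countable_toSet fun _ _ => measurableSet_Ioc

theorem Ioc_spike_subset_Ioc_block {δ c : ℝ} (hδ1 : δ ≤ 1) (hc : 0 ≤ c) (k : ℕ) :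
    Ioc (k * c) (k * c + δ * c) ⊆ Ioc (k * c) ((k + 1 : ℕ) * c) :=
  Ioc_subset_Ioc_right (by push_cast; nlinarith)

theorem Ioc_block_subset {c : ℝ} (hc : 0 ≤ c) {k n : ℕ} (hk : k < n) :
    Ioc (k * c) ((k + 1 : ℕ) * c) ⊆ Ioc 0 (n * c) :=
  Ioc_subset_Ioc (by positivity) (by gcongr; exact_mod_cast hk)

theorem pairwise_disjoint_Ioc_block {c : ℝ} (hc : 0 ≤ c) :
    Pairwise (Function.onFun Disjoint fun k : ℕ => Ioc (k * c) ((k + 1 : ℕ) * c)) :=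
  (monotone_nat_of_le_succ fun k => by gcongr; simp).pairwise_disjoint_on_Ioc_succ

section SpikeSets

variable {T δ : ℝ} {n : ℕ}

theorem mem_spikeSet_iff_of_mem_block (hT : 0 ≤ T) (hδ1 : δ ≤ 1) {k : ℕ} (hk : k < n) {s : ℝ}
    (hs : s ∈ Ioc (k * (T / n)) ((k + 1 : ℕ) * (T / n))) :
    s ∈ spikeSet T δ n ↔ s ∈ Ioc (k * (T / n)) (k * (T / n) + δ * (T / n)) := by
  have hc : 0 ≤ T / n := by positivity
  refine ⟨fun h => ?_, fun h => mem_biUnion (Finset.mem_range.2 hk) h⟩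
  obtain ⟨j, -, hj⟩ := mem_iUnion₂.1 h
  obtain rfl : j = k := by
    by_contra hjk
    exact (pairwise_disjoint_Ioc_block hc hjk).ne_of_mem
      (Ioc_spike_subset_Ioc_block hδ1 hc j hj) hs rfl
  exact hj

theorem spikeSet_subset_Ioc (hT : 0 ≤ T) (hδ1 : δ ≤ 1) (n : ℕ) : spikeSet T δ n ⊆ Ioc 0 T := by
  rcases n.eq_zero_or_pos with rfl | hn
  · simp [spikeSet]
  have hc : 0 ≤ T / n := by positivity
  refine iUnion₂_subset fun k hk => (Ioc_spike_subset_Ioc_block hδ1 hc k).trans ?_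
  simpa [mul_div_cancel₀, hn.ne'] using Ioc_block_subset hc (Finset.mem_range.1 hk)

theorem volume_spikeSet (hT : 0 ≤ T) (hδ1 : δ ≤ 1) (hn : n ≠ 0) :
    volume (spikeSet T δ n) = ENNReal.ofReal (δ * T) := by
  have hc : 0 ≤ T / n := by positivity
  rw [spikeSet, measure_biUnion_finset
    (fun i _ j _ hij => ((pairwise_disjoint_Ioc_block hc hij).mono
      (Ioc_spike_subset_Ioc_block hδ1 hc i) (Ioc_spike_subset_Ioc_block hδ1 hc j)))
    (fun _ _ => measurableSet_Ioc)]
  simp only [Real.volume_Ioc, add_sub_cancel_left, Finset.sum_const, Finset.card_range,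
    nsmul_eq_mul, ← ENNReal.ofReal_natCast, ← ENNReal.ofReal_mul (Nat.cast_nonneg n)]
  congr 1
  field_simp

theorem abs_spikeWeight_le (hδ0 : 0 < δ) (hδ1 : δ ≤ 1) (E : Set ℝ) (s : ℝ) :
    |spikeWeight δ E s| ≤ 1 / δ := by
  have : 1 ≤ 1 / δ := by rw [le_div_iff₀ hδ0]; linarith
  by_cases hs : s ∈ E <;>
    simp only [spikeWeight, hs, indicator_of_mem, indicator_of_notMem, not_false_eq_true, mul_one,
      mul_zero, abs_le] <;> constructor <;> linarith

theorem measurable_spikeWeight (δ : ℝ) {E : Set ℝ} (hE : MeasurableSet E) :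
    Measurable (spikeWeight δ E) :=
  (measurable_const.mul (measurable_const.indicator hE)).sub measurable_const

end SpikeSets

section Oscillation

variable {X : Type*} [NormedAddCommGroup X] [NormedSpace ℝ X] {T δ : ℝ} {n : ℕ}

theorem integrable_spikeWeight_smul {μ : Measure ℝ} (hδ0 : 0 < δ) (hδ1 : δ ≤ 1) {E : Set ℝ}
    (hE : MeasurableSet E) {ψ : ℝ → X} (hψ : Integrable ψ μ) :
    Integrable (fun x => spikeWeight δ E x • ψ x) μ :=
  hψ.bdd_smul (1 / δ) (measurable_spikeWeight δ hE).aestronglyMeasurable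
    (.of_forall fun x => (abs_spikeWeight_le hδ0 hδ1 E x))

theorem intervalIntegral_spikeWeight_smul_block (hT : 0 ≤ T) (hδ0 : 0 ≤ δ) (hδ1 : δ ≤ 1) {k : ℕ}
    (hk : k < n) {g : ℝ → X}
    (hg : IntervalIntegrable g volume (k * (T / n)) ((k + 1 : ℕ) * (T / n))) :
    ∫ x in k * (T / n)..(k + 1 : ℕ) * (T / n), spikeWeight δ (spikeSet T δ n) x • g x
      = (1 / δ) • (∫ x in k * (T / n)..k * (T / n) + δ * (T / n), g x)
        - ∫ x in k * (T / n)..(k + 1 : ℕ) * (T / n), g x := by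
  have hc : 0 ≤ T / n := by positivity
  set A := Ioc (k * (T / n)) (k * (T / n) + δ * (T / n))
  have hAB := Ioc_spike_subset_Ioc_block hδ1 hc k
  have hweight : EqOn (fun x => spikeWeight δ (spikeSet T δ n) x • g x)
      (fun x => (1 / δ) • A.indicator g x - g x) (Ioc (k * (T / n)) ((k + 1 : ℕ) * (T / n))) := by
    intro x hx
    simp only [spikeWeight, indicator, mem_spikeSet_iff_of_mem_block hT hδ1 hk hx]
    split_ifs <;> simp [sub_smul]
  have hg' := (intervalIntegrable_iff_integrableOn_Ioc_of_le
    (show k * (T / n) ≤ (k + 1 : ℕ) * (T / n) by gcongr; simp)).1 hg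
  rw [intervalIntegral.integral_of_le (by gcongr; simp),
    intervalIntegral.integral_of_le (by nlinarith),
    intervalIntegral.integral_of_le (by gcongr; simp),
    setIntegral_congr_fun measurableSet_Ioc hweight,
    integral_sub (f := fun x => (1 / δ) • A.indicator g x)
      (((hg'.mono_set hAB).integrable_indicator measurableSet_Ioc).integrableOn.smul (1 / δ)) hg',
    integral_smul, setIntegral_indicator measurableSet_Ioc, inter_eq_right.2 hAB]

theorem norm_integral_smul_sub_integral_smul_le {α : Type*} [MeasurableSpace α] {μ : Measure α}
    {w : α → ℝ} {C : ℝ} (hw_meas : AEStronglyMeasurable w μ) (hw : ∀ x, |w x| ≤ C)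
    {f g : α → X} (hf : Integrable f μ) (hg : Integrable g μ) :
    ‖∫ x, w x • f x ∂μ - ∫ x, w x • g x ∂μ‖ ≤ C * ∫ x, ‖f x - g x‖ ∂μ := by
  rw [← integral_sub (f := fun x => w x • f x) (g := fun x => w x • g x)
    (hf.bdd_smul C hw_meas (.of_forall hw)) (hg.bdd_smul C hw_meas (.of_forall hw)),
    ← integral_const_mul]
  refine norm_integral_le_of_norm_le ((hf.sub hg).norm.const_mul C) (.of_forall fun x => ?_)
  rw [← smul_sub, norm_smul, Real.norm_eq_abs]
  exact mul_le_mul_of_nonneg_right (hw x) (norm_nonneg _)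

theorem tendstoUniformly_integral_smul {ι β α : Type*} [TopologicalSpace β] [CompactSpace β]
    [MeasurableSpace α] {μ : Measure α} {l : Filter ι} {w : ι → α → ℝ} {C : ℝ}
    (hw_meas : ∀ i, AEStronglyMeasurable (w i) μ) (hw : ∀ i x, |w i x| ≤ C)
    {G : β → α → X} (hG_int : ∀ t, Integrable (G t) μ)
    (hG_cont : ∀ t, Tendsto (fun t' => ∫ x, ‖G t' x - G t x‖ ∂μ) (𝓝 t) (𝓝 0))
    (hlim : ∀ t, Tendsto (fun i => ∫ x, w i x • G t x ∂μ) l (𝓝 0)) :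
    TendstoUniformly (fun i t => ∫ x, w i x • G t x ∂μ) 0 l := by
  have hequi : Equicontinuous fun i t => ∫ x, w i x • G t x ∂μ := fun t =>
    Metric.equicontinuousAt_of_continuity_modulus (fun t' => C * ∫ x, ‖G t' x - G t x‖ ∂μ)
      (by simpa using (hG_cont t).const_mul C) _ (.of_forall fun t' i => by
        rw [dist_eq_norm, norm_sub_rev]
        exact norm_integral_smul_sub_integral_smul_le (hw_meas i) (hw i) (hG_int t') (hG_int t))
  exact UniformFun.tendsto_iff_tendstoUniformly.1
    ((hequi.tendsto_uniformFun_iff_pi l 0).2 (tendsto_pi_nhds.2 hlim))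

theorem setIntegral_smul_indicator_of_subset {α : Type*} [MeasurableSpace α] {μ : Measure α}
    {A B : Set α} (hA : MeasurableSet A) (hAB : A ⊆ B) (w : α → ℝ) (f : α → X) :
    ∫ x in B, w x • A.indicator f x ∂μ = ∫ x in A, w x • f x ∂μ := by
  simp_rw [← indicator_smul_apply]
  rw [setIntegral_indicator hA, inter_eq_right.2 hAB]

variable [CompleteSpace X]

theorem norm_inv_smul_intervalIntegral_sub_le {g : ℝ → X} (hg : Continuous g) {a c δ ε : ℝ}
    (hc : 0 ≤ c) (hδ0 : 0 < δ) (hδ1 : δ ≤ 1) (hmod : ∀ x ∈ Icc a (a + c), ‖g x - g a‖ ≤ ε) :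
    ‖(1 / δ) • (∫ x in a..a + δ * c, g x) - ∫ x in a..a + c, g x‖ ≤ 2 * ε * c := by
  have hδc : δ * c ≤ c := by nlinarith
  have hosc : ∀ d ∈ Icc 0 c, ‖∫ x in a..a + d, (g x - g a)‖ ≤ ε * d := by
    intro d hd
    have := intervalIntegral.norm_integral_le_of_norm_le_const (a := a) (b := a + d)
      fun x hx => hmod x (Ioc_subset_Icc_self.trans
        (Icc_subset_Icc_right (show a + d ≤ a + c by linarith [hd.2]))
        (by rwa [uIoc_of_le (show a ≤ a + d by linarith [hd.1])] at hx))
    rwa [add_sub_cancel_left, abs_of_nonneg hd.1] at this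
  -- Since `(1/δ)(δc) = c`, subtracting the constant `g a` from `g` changes nothing.
  have hcenter : (1 / δ) • (∫ x in a..a + δ * c, g x) - ∫ x in a..a + c, g x
      = (1 / δ) • (∫ x in a..a + δ * c, (g x - g a)) - ∫ x in a..a + c, (g x - g a) := by
    rw [intervalIntegral.integral_sub (hg.intervalIntegrable _ _) intervalIntegrable_const,
      intervalIntegral.integral_sub (hg.intervalIntegrable _ _) intervalIntegrable_const,
      intervalIntegral.integral_const, intervalIntegral.integral_const, add_sub_cancel_left,
      add_sub_cancel_left, smul_sub, smul_smul, one_div, inv_mul_cancel_left₀ hδ0.ne']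
    abel
  calc _ ≤ (1 / δ) * ‖∫ x in a..a + δ * c, (g x - g a)‖ + ‖∫ x in a..a + c, (g x - g a)‖ := by
        rw [hcenter]
        refine (norm_sub_le _ _).trans_eq ?_
        rw [norm_smul, Real.norm_of_nonneg (by positivity : 0 ≤ 1 / δ)]
    _ ≤ (1 / δ) * (ε * (δ * c)) + ε * c := by
        gcongr
        · exact hosc _ ⟨by positivity, hδc⟩
        · exact hosc _ ⟨hc, le_rfl⟩
    _ = 2 * ε * c := by field_simp; ring

theorem norm_setIntegral_spikeWeight_smul_le (hT : 0 ≤ T) (hδ0 : 0 < δ) (hδ1 : δ ≤ 1) (hn : n ≠ 0)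
    {g : ℝ → X} (hg : Continuous g) {ε : ℝ}
    (hmod : ∀ x y, |x - y| ≤ T / n → ‖g x - g y‖ ≤ ε) :
    ‖∫ s in Ioc 0 T, spikeWeight δ (spikeSet T δ n) s • g s‖ ≤ 2 * ε * T := by
  have hc : 0 ≤ T / n := by positivity
  have hnc : (n : ℝ) * (T / n) = T := by field_simp
  have hint : IntegrableOn (fun s => spikeWeight δ (spikeSet T δ n) s • g s) (Ioc 0 T) :=
    integrable_spikeWeight_smul hδ0 hδ1 (measurableSet_spikeSet T δ n)
      (hg.integrableOn_Icc.mono_set Ioc_subset_Icc_self)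
  have hsum := intervalIntegral.sum_integral_adjacent_intervals (n := n)
    (a := fun k : ℕ => (k : ℝ) * (T / n))
    (f := fun s => spikeWeight δ (spikeSet T δ n) s • g s) fun k hk =>
      (intervalIntegrable_iff_integrableOn_Ioc_of_le (by gcongr; simp)).2
        (hint.mono_set (by simpa only [hnc] using Ioc_block_subset hc hk))
  simp only [Nat.cast_zero, zero_mul, hnc] at hsum
  rw [← intervalIntegral.integral_of_le hT, ← hsum]
  calc _ ≤ ∑ k ∈ Finset.range n, 2 * ε * (T / n) := by
        refine norm_sum_le_of_le _ fun k hk => ?_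
        rw [intervalIntegral_spikeWeight_smul_block hT hδ0.le hδ1 (Finset.mem_range.1 hk)
          (hg.intervalIntegrable _ _), show ((k + 1 : ℕ) : ℝ) * (T / n) = k * (T / n) + T / n by
            push_cast; ring]
        exact norm_inv_smul_intervalIntegral_sub_le hg hc hδ0 hδ1 fun x hx =>
          hmod x _ (by rw [abs_of_nonneg (by linarith [hx.1])]; linarith [hx.2])
    _ = 2 * ε * T := by rw [Finset.sum_const, Finset.card_range, nsmul_eq_mul, mul_left_comm, hnc]

theorem tendsto_setIntegral_spikeWeight_smul (hT : 0 ≤ T) (hδ0 : 0 < δ) (hδ1 : δ ≤ 1)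
    {ψ : ℝ → X} (hψ : Integrable ψ) :
    Tendsto (fun n => ∫ s in Ioc 0 T, spikeWeight δ (spikeSet T δ n) s • ψ s) atTop (𝓝 0) := by
  rw [Metric.tendsto_atTop]
  intro ε hε
  obtain ⟨g, hg_supp, hψg, hg_cont, hg_int⟩ :=
    hψ.exists_hasCompactSupport_integral_sub_le (show 0 < δ * ε / 2 by positivity)
  set ε' := ε / (4 * (T + 1))
  obtain ⟨η, hη, hgη⟩ := Metric.uniformContinuous_iff.1
    (hg_supp.uniformContinuous_of_continuous hg_cont) ε' (by positivity)
  obtain ⟨N, hN⟩ := exists_nat_gt (T / η)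
  refine ⟨N + 1, fun n hn => ?_⟩
  have hn0 : (0 : ℝ) < n := by exact_mod_cast (N.succ_pos.trans_le hn)
  have hTn : T / n < η := by
    rw [div_lt_iff₀ hn0, mul_comm, ← div_lt_iff₀ hη]
    exact hN.trans_le (by exact_mod_cast N.le_succ.trans hn)
  set w := spikeWeight δ (spikeSet T δ n)
  have hE := measurableSet_spikeSet T δ n
  have hsmooth : ‖∫ s in Ioc 0 T, w s • g s‖ ≤ 2 * ε' * T :=
    norm_setIntegral_spikeWeight_smul_le hT hδ0 hδ1 (by exact_mod_cast hn0.ne') hg_cont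
      fun x y hxy => by rw [← dist_eq_norm]; exact (hgη (by rw [Real.dist_eq]; linarith)).le
  have hψg_int : Integrable (fun s => ψ s - g s) := hψ.sub hg_int
  have hrough : ‖∫ s in Ioc 0 T, w s • (ψ s - g s)‖ ≤ ε / 2 := calc
    _ ≤ ∫ s in Ioc 0 T, 1 / δ * ‖ψ s - g s‖ :=
        norm_integral_le_of_norm_le (hψg_int.norm.const_mul _).integrableOn
          (.of_forall fun s => by
            rw [norm_smul, Real.norm_eq_abs]; gcongr; exact abs_spikeWeight_le hδ0 hδ1 _ s)
    _ ≤ 1 / δ * ∫ s, ‖ψ s - g s‖ := by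
        rw [integral_const_mul]
        exact mul_le_mul_of_nonneg_left
          (setIntegral_le_integral hψg_int.norm (.of_forall fun _ => norm_nonneg _)) (by positivity)
    _ ≤ 1 / δ * (δ * ε / 2) := by gcongr
    _ = ε / 2 := by field_simp
  have hsplit : ∫ s in Ioc 0 T, w s • ψ s
      = (∫ s in Ioc 0 T, w s • g s) + ∫ s in Ioc 0 T, w s • (ψ s - g s) := by
    rw [← integral_add (integrable_spikeWeight_smul hδ0 hδ1 hE hg_int).integrableOn
      (integrable_spikeWeight_smul hδ0 hδ1 hE hψg_int).integrableOn]
    simp only [w, smul_sub, add_sub_cancel]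
  have hε' : 2 * ε' * T < ε / 2 := calc
    2 * ε' * T = ε / 2 * (T / (T + 1)) := by simp only [ε']; field_simp; ring
    _ < ε / 2 :=
      mul_lt_of_lt_one_right (by positivity) ((div_lt_one (by positivity)).2 (by linarith))
  rw [dist_zero_right, hsplit]
  linarith [norm_add_le (∫ s in Ioc 0 T, w s • g s) (∫ s in Ioc 0 T, w s • (ψ s - g s))]

end Oscillation

section Kernel

variable {X : Type*} [NormedAddCommGroup X] {T : ℝ} {φ : ℝ → ℝ → X}

theorem tendsto_indicator_Ioc_apply {s t : ℝ} (hφ : ContinuousOn (fun t => φ t s) (Icc s T))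
    (hs : 0 < s) (hst : s ≠ t) (ht : t ≤ T) :
    Tendsto (fun t' => (Ioc 0 t').indicator (φ t') s) (𝓝[Iic T] t)
      (𝓝 ((Ioc 0 t).indicator (φ t) s)) := by
  rcases hst.lt_or_gt with hst | hts
  · have hnhds : Icc s T ∈ 𝓝[Iic T] t :=
      mem_nhdsWithin.2 ⟨Ioi s, isOpen_Ioi, hst, fun x hx => ⟨le_of_lt hx.1, hx.2⟩⟩
    rw [indicator_of_mem (show s ∈ Ioc 0 t from ⟨hs, hst.le⟩)]
    refine ((hφ t ⟨hst.le, ht⟩).mono_of_mem_nhdsWithin hnhds).tendsto.congr' ?_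
    filter_upwards [nhdsWithin_le_nhds (lt_mem_nhds hst)] with t' ht'
    rw [indicator_of_mem (show s ∈ Ioc 0 t' from ⟨hs, ht'.le⟩)]
  · rw [indicator_of_notMem (show s ∉ Ioc 0 t from fun h => h.2.not_gt hts)]
    refine tendsto_const_nhds.congr' ?_
    filter_upwards [nhdsWithin_le_nhds (gt_mem_nhds hts)] with t' ht'
    rw [indicator_of_notMem (show s ∉ Ioc 0 t' from fun h => h.2.not_gt ht')]

variable {φbar : ℝ → ℝ}

theorem norm_indicator_Ioc_le (hbound : ∀ t s : ℝ, 0 ≤ s → s ≤ t → t ≤ T → ‖φ t s‖ ≤ φbar s)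
    {t s : ℝ} (ht : t ≤ T) (hs : s ∈ Ioc 0 T) : ‖(Ioc 0 t).indicator (φ t) s‖ ≤ φbar s := by
  by_cases hst : s ∈ Ioc 0 t
  · rw [indicator_of_mem hst]
    exact hbound t s hst.1.le hst.2 ht
  · rw [indicator_of_notMem hst, norm_zero]
    exact (norm_nonneg _).trans (hbound s s hs.1.le le_rfl hs.2)

theorem tendsto_integral_norm_indicator_Ioc_sub
    (hφ_meas : ∀ t, AEStronglyMeasurable (φ t) (volume.restrict (Ioc 0 T)))
    (hφbar_int : IntegrableOn φbar (Ioc 0 T))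
    (hbound : ∀ t s : ℝ, 0 ≤ s → s ≤ t → t ≤ T → ‖φ t s‖ ≤ φbar s)
    (hcont : ∀ᵐ s ∂(volume.restrict (Ioc 0 T)), ContinuousOn (fun t => φ t s) (Icc s T))
    (t : Icc 0 T) :
    Tendsto (fun t' : Icc 0 T =>
        ∫ s in Ioc 0 T, ‖(Ioc 0 (t' : ℝ)).indicator (φ t') s - (Ioc 0 (t : ℝ)).indicator (φ t) s‖)
      (𝓝 t) (𝓝 0) := by
  have hval : Tendsto (fun t' : Icc 0 T => (t' : ℝ)) (𝓝 t) (𝓝[Iic T] t) :=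
    tendsto_nhdsWithin_iff.2 ⟨continuous_subtype_val.tendsto t, .of_forall fun t' => t'.2.2⟩
  suffices h : Tendsto _ (𝓝 t) (𝓝 (∫ _ in Ioc 0 T, (0 : ℝ))) by simpa using h
  refine tendsto_integral_filter_of_dominated_convergence (fun s => 2 * φbar s)
    (.of_forall fun t' => (((hφ_meas t').indicator measurableSet_Ioc).sub
      ((hφ_meas t).indicator measurableSet_Ioc)).norm)
    (.of_forall fun t' => ?_) (hφbar_int.const_mul 2) ?_
  · filter_upwards [ae_restrict_mem measurableSet_Ioc] with s hs
    rw [norm_norm, two_mul]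
    exact (norm_sub_le _ _).trans (add_le_add (norm_indicator_Ioc_le hbound t'.2.2 hs)
      (norm_indicator_Ioc_le hbound t.2.2 hs))
  · filter_upwards [hcont, ae_restrict_of_ae (volume.ae_ne (t : ℝ)),
      ae_restrict_mem measurableSet_Ioc] with s hcont_s hst hs
    exact tendsto_iff_norm_sub_tendsto_zero.1
      ((tendsto_indicator_Ioc_apply hcont_s hs.1 hst t.2.2).comp hval)

end Kernel

end SpikeVariation

open SpikeVariation

/-- spike-variation set lemma, nonsingular version: for a Banach-space-valued
kernel `φ` on `Δ`, dominated by an integrable `φ̄` and continuous in its first variable, and any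
`δ ∈ (0,1)`, there is a measurable `E_δ ⊆ [0,T]` of measure `δT` with
`sup_{t∈[0,T]} ‖∫₀ᵗ ((1/δ)1_{E_δ}(s) − 1) φ(t,s) ds‖ ≤ δ`. -/
theorem spike_variation_nonsingular
    (X : Type*) [NormedAddCommGroup X] [NormedSpace ℝ X] [CompleteSpace X]
    (T : ℝ) (hT : 0 < T)
    (φ : ℝ → ℝ → X) (φbar : ℝ → ℝ)
    (hφ_meas : StronglyMeasurable (Function.uncurry φ))
    (hφbar_int : IntegrableOn φbar (Set.Icc 0 T))
    (hbound : ∀ t s : ℝ, 0 ≤ s → s ≤ t → t ≤ T → ‖φ t s‖ ≤ φbar s)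
    (hcont : ∀ᵐ s ∂(volume.restrict (Set.Icc 0 T)),
      ContinuousOn (fun t => φ t s) (Set.Icc s T))
    (δ : ℝ) (hδ : δ ∈ Set.Ioo (0:ℝ) 1) :
    ∃ E : Set ℝ, MeasurableSet E ∧ E ⊆ Set.Icc 0 T ∧
      volume E = ENNReal.ofReal (δ * T) ∧
      ∀ t ∈ Set.Icc (0:ℝ) T,
        ‖∫ s in Set.Ioc 0 t, ((1 / δ) * Set.indicator E (fun _ => (1:ℝ)) s - 1) • φ t s‖ ≤ δ := by
  obtain ⟨hδ0, hδ1⟩ := hδ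
  have hφbar_int' := hφbar_int.mono_set Ioc_subset_Icc_self
  have hφ_slice (t : ℝ) : StronglyMeasurable (φ t) :=
    hφ_meas.comp_measurable measurable_prodMk_left
  have hG_int (t : Icc 0 T) : IntegrableOn ((Ioc 0 (t : ℝ)).indicator (φ t)) (Ioc 0 T) :=
    hφbar_int'.mono' ((hφ_slice t).aestronglyMeasurable.indicator measurableSet_Ioc)
      ((ae_restrict_iff' measurableSet_Ioc).2
        (.of_forall fun _ => norm_indicator_Ioc_le hbound t.2.2))
  have hG_cont := tendsto_integral_norm_indicator_Ioc_sub
    (fun t => (hφ_slice t).aestronglyMeasurable) hφbar_int' hbound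
    (ae_restrict_of_ae_restrict_of_subset Ioc_subset_Icc_self hcont)
  have hG_lim (t : Icc 0 T) := tendsto_setIntegral_spikeWeight_smul hT.le hδ0 hδ1.le
    ((integrableOn_iff_integrable_of_support_subset
      (support_indicator_subset.trans (Ioc_subset_Ioc_right t.2.2))).1 (hG_int t))
  have hunif := tendstoUniformly_integral_smul
    (fun n => (measurable_spikeWeight δ (measurableSet_spikeSet T δ n)).aestronglyMeasurable)
    (fun n => abs_spikeWeight_le hδ0 hδ1.le _) hG_int hG_cont hG_lim
  obtain ⟨n, hn, hn0⟩ :=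
    ((Metric.tendstoUniformly_iff.1 hunif δ hδ0).and (eventually_ne_atTop 0)).exists
  refine ⟨spikeSet T δ n, measurableSet_spikeSet T δ n,
    (spikeSet_subset_Ioc hT.le hδ1.le n).trans Ioc_subset_Icc_self,
    volume_spikeSet hT.le hδ1.le hn0, fun t ht => ?_⟩
  have := hn ⟨t, ht⟩
  rw [Pi.zero_apply, dist_zero_left, setIntegral_smul_indicator_of_subset measurableSet_Ioc
    (Ioc_subset_Ioc_right ht.2)] at this
  exact this.le
end
end
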